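/- arXiv:2602.22162 — 2 statements merged into one kernel-verified Lean document; each statement's English description precedes it below -/
import Mathlib

section
/- Let l : V → ℝ be a linear form such that the set {a(w) + l(w) : w ∈ W} is bounded below, and define θ^pl_ρ(a, l) = inf_{w ∈ W}(a(w) + l(w)) + (1/8)Q(ρ). Then for every v ∈ W the set {a(w) + l(w) + B(v,w) : w ∈ W} is also bounded below, and the cocycle condition −θ^pl_ρ(a, l + B(v,·)) + θ^pl_ρ(a, l) = a(v) + l(v) holds, where l + B(v,·) denotes the linear form w ↦ l(w) + B(v,w). -/
noncomputable section

/-- The inclusion of the lattice `W = ℤ^g` into `V = ℝ^g`. -/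
def latt {g : ℕ} (w : Fin g → ℤ) : Fin g → ℝ := fun i => (w i : ℝ)

/-- The quadratic function `a(x) = (1/2) B(x,x) - (1/2) B(ρ,x)` associated to a
bilinear form `B` and a characteristic `ρ ∈ W`. -/
def quadFn {g : ℕ} (B : (Fin g → ℝ) →ₗ[ℝ] (Fin g → ℝ) →ₗ[ℝ] ℝ)
    (ρ : Fin g → ℤ) (x : Fin g → ℝ) : ℝ :=
  (1 / 2) * B x x - (1 / 2) * B (latt ρ) x

/-- The pl-tropical theta function with characteristic `ρ`, evaluated at a
function `l' : V → ℝ` (a linear form, possibly shifted):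
`θ^pl_ρ(a, l') = inf_{w ∈ W} (a(w) + l'(w)) + (1/8) Q(ρ)`. -/
def thetaPL {g : ℕ} (B : (Fin g → ℝ) →ₗ[ℝ] (Fin g → ℝ) →ₗ[ℝ] ℝ)
    (ρ : Fin g → ℤ) (l' : (Fin g → ℝ) → ℝ) : ℝ :=
  (⨅ w : Fin g → ℤ, (quadFn B ρ (latt w) + l' (latt w))) +
    (1 / 8) * B (latt ρ) (latt ρ)

lemma latt_add {g : ℕ} (w v : Fin g → ℤ) : latt (w + v) = latt w + latt v := by
  funext i; simp [latt]

lemma key {g : ℕ} (B : (Fin g → ℝ) →ₗ[ℝ] (Fin g → ℝ) →ₗ[ℝ] ℝ)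
    (hsymm : ∀ x y, B x y = B y x)
    (ρ : Fin g → ℤ) (l : (Fin g → ℝ) →ₗ[ℝ] ℝ) (v w : Fin g → ℤ) :
    quadFn B ρ (latt w) + (l (latt w) + B (latt v) (latt w)) =
      (quadFn B ρ (latt (w + v)) + l (latt (w + v)))
        - (quadFn B ρ (latt v) + l (latt v)) := by
  rw [latt_add]
  simp only [quadFn, map_add, LinearMap.add_apply]
  rw [hsymm (latt w) (latt v)]
  ring

/-- The cocycle condition for the pl-tropical theta function: if
`{a(w) + l(w) : w ∈ W}` is bounded below then, for every `v ∈ W`, the set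
`{a(w) + l(w) + B(v,w) : w ∈ W}` is also bounded below, and
`-θ^pl_ρ(a, l + B(v,·)) + θ^pl_ρ(a, l) = a(v) + l(v)`. -/
theorem stmt3 (g : ℕ) (hg : 0 < g)
    (B : (Fin g → ℝ) →ₗ[ℝ] (Fin g → ℝ) →ₗ[ℝ] ℝ)
    (hsymm : ∀ x y, B x y = B y x)
    (hpsd : ∀ x : Fin g → ℝ, 0 ≤ B x x)
    (ρ : Fin g → ℤ) (l : (Fin g → ℝ) →ₗ[ℝ] ℝ)
    (hbdd : BddBelow (Set.range fun w : Fin g → ℤ =>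
      quadFn B ρ (latt w) + l (latt w))) :
    ∀ v : Fin g → ℤ,
      BddBelow (Set.range fun w : Fin g → ℤ =>
        quadFn B ρ (latt w) + (l (latt w) + B (latt v) (latt w))) ∧
      -(thetaPL B ρ (fun x => l x + B (latt v) x)) + thetaPL B ρ (fun x => l x)
        = quadFn B ρ (latt v) + l (latt v) := by
  intro v
  set c : ℝ := quadFn B ρ (latt v) + l (latt v) with hc
  set f : (Fin g → ℤ) → ℝ := fun w => quadFn B ρ (latt w) + l (latt w) with hf
  have hkey : ∀ w, quadFn B ρ (latt w) + (l (latt w) + B (latt v) (latt w))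
      = f (w + v) - c := fun w => key B hsymm ρ l v w
  have hsurj : Function.Surjective (fun w : Fin g → ℤ => w + v) :=
    (Equiv.addRight v).surjective
  have hrange : (Set.range fun w : Fin g → ℤ => f (w + v)) = Set.range f :=
    hsurj.range_comp f
  have hbdd' : BddBelow (Set.range fun w : Fin g → ℤ =>
      quadFn B ρ (latt w) + (l (latt w) + B (latt v) (latt w))) := by
    obtain ⟨m, hm⟩ := hbdd
    refine ⟨m - c, ?_⟩
    rintro x ⟨w, rfl⟩
    simp only [hkey]
    have : m ≤ f (w + v) := hm ⟨w + v, rfl⟩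
    linarith
  refine ⟨hbdd', ?_⟩
  have hiInf : (⨅ w : Fin g → ℤ, (quadFn B ρ (latt w) + (l (latt w) + B (latt v) (latt w))))
      = (⨅ w : Fin g → ℤ, f w) - c := by
    have h1 : (⨅ w : Fin g → ℤ, (quadFn B ρ (latt w) + (l (latt w) + B (latt v) (latt w))))
        = ⨅ w : Fin g → ℤ, (f (w + v) - c) := by
      exact iInf_congr hkey
    rw [h1]
    have hbf : BddBelow (Set.range fun w : Fin g → ℤ => f (w + v)) := by
      rw [hrange]; exact hbdd
    rw [← ciInf_sub hbf]
    congr 1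
    exact hsurj.iInf_comp f
  simp only [thetaPL]
  rw [hiInf]
  ring
end
end

section
/- Let ρ, ρ' ∈ W with ρ − ρ' ∈ 2·W, say ρ − ρ' = 2v with v ∈ W, and let a(x) = (1/2)B(x,x) − (1/2)B(ρ,x) and a'(x) = (1/2)B(x,x) − (1/2)B(ρ',x) be the associated quadratic functions (so that a'(w) = a(w + v) − a(v) for all w). Then the invariant tropical theta function only depends on the class of the characteristic modulo 2·W: for every x ∈ V, inf_{w ∈ W}(a(w) + B(x,w)) + (1/8)B(ρ,ρ) − (1/2)B(x,ρ) = inf_{w ∈ W}(a'(w) + B(x,w)) + (1/8)B(ρ',ρ') − (1/2)B(x,ρ'). -/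
noncomputable section

lemma latt_sub {g : ℕ} (w v : Fin g → ℤ) : latt (w - v) = latt w - latt v := by
  funext i; simp [latt]

/-- The invariant tropical theta function only depends on the characteristic
modulo `2·W`: if `ρ - ρ' = 2v` with `v ∈ W`, then for every `x ∈ V`,
`inf_{w}(a(w) + B(x,w)) + (1/8) B(ρ,ρ) - (1/2) B(x,ρ)`
equals the same expression with `ρ` replaced by `ρ'` (and `a` by `a'`). -/
theorem stmt8 (g : ℕ) (hg : 0 < g)
    (B : (Fin g → ℝ) →ₗ[ℝ] (Fin g → ℝ) →ₗ[ℝ] ℝ)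
    (hsymm : ∀ x y, B x y = B y x)
    (hpsd : ∀ x : Fin g → ℝ, 0 ≤ B x x)
    (ρ ρ' v : Fin g → ℤ) (hv : ρ - ρ' = 2 • v) :
    ∀ x : Fin g → ℝ,
      (⨅ w : Fin g → ℤ, (quadFn B ρ (latt w) + B x (latt w)))
          + (1 / 8) * B (latt ρ) (latt ρ) - (1 / 2) * B x (latt ρ)
        = (⨅ w : Fin g → ℤ, (quadFn B ρ' (latt w) + B x (latt w)))
          + (1 / 8) * B (latt ρ') (latt ρ') - (1 / 2) * B x (latt ρ') := by
  intro x
  have hrho : latt ρ = latt ρ' + (2:ℝ) • latt v := by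
    funext i
    have h := congrFun hv i
    have h2 : (ρ i : ℝ) - (ρ' i : ℝ) = 2 * (v i : ℝ) := by
      have : ρ i - ρ' i = 2 * v i := by simpa using h
      exact_mod_cast this
    simp [latt, Pi.add_apply, Pi.smul_apply, smul_eq_mul]
    linarith
  set F : (Fin g → ℤ) → ℝ := fun w => quadFn B ρ (latt w) + B x (latt w) with hF
  set G : (Fin g → ℤ) → ℝ := fun w => quadFn B ρ' (latt w) + B x (latt w) with hG
  set c : ℝ := (1/2) * B (latt v) (latt v) + (1/2) * B (latt ρ') (latt v)
      - B x (latt v) with hc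
  -- key pointwise identity
  have key : ∀ w, G (w - v) = F w + c := by
    intro w
    have hs : B (latt w) (latt v) = B (latt v) (latt w) := hsymm _ _
    simp only [hF, hG, hc, quadFn, latt_sub, map_sub, LinearMap.sub_apply, hrho,
      map_add, LinearMap.add_apply, map_smul, LinearMap.smul_apply, smul_eq_mul]
    ring_nf
    linarith
  -- boundedness below of F
  have hbdd : BddBelow (Set.range F) := by
    set y : Fin g → ℝ := x - (1/2 : ℝ) • latt ρ with hy
    refine ⟨-(1/2) * B y y, ?_⟩
    rintro r ⟨w, rfl⟩
    have h0 := hpsd (latt w + y)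
    have hs : B (latt w) y = B y (latt w) := hsymm _ _
    have hy' : B y (latt w) = B x (latt w) - (1/2) * B (latt ρ) (latt w) := by
      simp [hy, map_sub, LinearMap.sub_apply, map_smul, LinearMap.smul_apply,
        smul_eq_mul]
    simp only [map_add, LinearMap.add_apply] at h0
    simp only [hF, quadFn]
    linarith
  have hne : Nonempty (Fin g → ℤ) := inferInstance
  have hshift : (⨅ w, G w) = (⨅ w, F w) + c := by
    have h1 : (⨅ w, G w) = ⨅ w : Fin g → ℤ, G (w - v) := by
      rw [iInf, iInf]
      congr 1
      have := ((Equiv.subRight v).surjective).range_comp G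
      exact this.symm
    rw [h1]
    simp_rw [key]
    exact (ciInf_add hbdd c).symm
  rw [hshift, hrho]
  have hs1 : B (latt ρ') (latt v) = B (latt v) (latt ρ') := hsymm _ _
  simp only [map_add, LinearMap.add_apply, map_smul, LinearMap.smul_apply,
    smul_eq_mul, hc]
  ring_nf
  linarith
end
end
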